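/- The subgroup of the symmetric group on {1,…,7} generated by the three double transpositions (1 2)(6 7), (4 5)(6 7), (1 2)(4 5) has orbits exactly {3}, {1,2}, {4,5}, {6,7}. -/
import Mathlib

/-- The three double transpositions `(1 2)(6 7)`, `(4 5)(6 7)`, `(1 2)(4 5)` of `{1,…,7}`,
realised on `Fin 7` (0-indexed: point `i` corresponds to `i - 1 : Fin 7`). -/
def edgeMonodromyPerms : Set (Equiv.Perm (Fin 7)) :=
  { Equiv.swap 0 1 * Equiv.swap 5 6,  -- (1 2)(6 7)
    Equiv.swap 3 4 * Equiv.swap 5 6,  -- (4 5)(6 7)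
    Equiv.swap 0 1 * Equiv.swap 3 4 } -- (1 2)(4 5)

open Pointwise MulAction

lemma orbit_subset (S : Set (Fin 7))
    (h : ∀ g ∈ edgeMonodromyPerms, g • S = S) (a : Fin 7) (ha : a ∈ S) :
    orbit (Subgroup.closure edgeMonodromyPerms) a ⊆ S := by
  have hle : Subgroup.closure edgeMonodromyPerms ≤ MulAction.stabilizer (Equiv.Perm (Fin 7)) S :=
    (Subgroup.closure_le _).2 (fun g hg => MulAction.mem_stabilizer_iff.2 (h g hg))
  rintro x ⟨g, rfl⟩
  have hg : (g : Equiv.Perm (Fin 7)) • S = S := MulAction.mem_stabilizer_iff.1 (hle g.2)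
  have : (g : Equiv.Perm (Fin 7)) • a ∈ (g : Equiv.Perm (Fin 7)) • S := Set.smul_mem_smul_set ha
  rwa [hg] at this

lemma mem_orbit' (a b : Fin 7) (g : Equiv.Perm (Fin 7)) (hg : g ∈ edgeMonodromyPerms)
    (hab : g a = b) : b ∈ orbit (Subgroup.closure edgeMonodromyPerms) a :=
  ⟨⟨g, Subgroup.subset_closure hg⟩, hab⟩

lemma smul_pair (g : Equiv.Perm (Fin 7)) (a b : Fin 7) :
    g • ({a, b} : Set (Fin 7)) = {g a, g b} := by
  rw [Set.smul_set_insert, Set.smul_set_singleton]; rfl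

lemma pair_stab (g : Equiv.Perm (Fin 7)) (a b : Fin 7)
    (h : g a = a ∧ g b = b ∨ g a = b ∧ g b = a) : g • ({a, b} : Set (Fin 7)) = {a, b} := by
  rw [smul_pair]
  rcases h with ⟨h1, h2⟩ | ⟨h1, h2⟩ <;> rw [h1, h2]
  exact Set.pair_comm _ _

lemma g1_mem : Equiv.swap 0 1 * Equiv.swap 5 6 ∈ edgeMonodromyPerms := by
  simp [edgeMonodromyPerms]
lemma g2_mem : Equiv.swap 3 4 * Equiv.swap 5 6 ∈ edgeMonodromyPerms := by
  simp [edgeMonodromyPerms]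
lemma g3_mem : Equiv.swap 0 1 * Equiv.swap 3 4 ∈ edgeMonodromyPerms := by
  simp [edgeMonodromyPerms]

lemma orbit2 : orbit (Subgroup.closure edgeMonodromyPerms) (2 : Fin 7) = {2} := by
  apply Set.Subset.antisymm
  · apply orbit_subset
    · rintro g (rfl | rfl | rfl) <;>
      · rw [Set.smul_set_singleton]
        norm_num [Set.singleton_eq_singleton_iff]
        decide
    · rfl
  · rintro x rfl; exact mem_orbit_self _

lemma orbit01 (a : Fin 7) (ha : a ∈ ({0, 1} : Set (Fin 7))) :
    orbit (Subgroup.closure edgeMonodromyPerms) a = {0, 1} := by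
  apply Set.Subset.antisymm
  · exact orbit_subset _ (by rintro g (rfl | rfl | rfl) <;> exact pair_stab _ _ _ (by decide)) a ha
  · rcases ha with rfl | rfl
    · rintro x (rfl | rfl)
      · exact mem_orbit_self _
      · exact mem_orbit' _ _ _ g1_mem (by decide)
    · rintro x (rfl | rfl)
      · exact mem_orbit' _ _ _ g1_mem (by decide)
      · exact mem_orbit_self _

lemma orbit34 (a : Fin 7) (ha : a ∈ ({3, 4} : Set (Fin 7))) :
    orbit (Subgroup.closure edgeMonodromyPerms) a = {3, 4} := by
  apply Set.Subset.antisymm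
  · exact orbit_subset _ (by rintro g (rfl | rfl | rfl) <;> exact pair_stab _ _ _ (by decide)) a ha
  · rcases ha with rfl | rfl
    · rintro x (rfl | rfl)
      · exact mem_orbit_self _
      · exact mem_orbit' _ _ _ g2_mem (by decide)
    · rintro x (rfl | rfl)
      · exact mem_orbit' _ _ _ g2_mem (by decide)
      · exact mem_orbit_self _

lemma orbit56 (a : Fin 7) (ha : a ∈ ({5, 6} : Set (Fin 7))) :
    orbit (Subgroup.closure edgeMonodromyPerms) a = {5, 6} := by
  apply Set.Subset.antisymm
  · exact orbit_subset _ (by rintro g (rfl | rfl | rfl) <;> exact pair_stab _ _ _ (by decide)) a ha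
  · rcases ha with rfl | rfl
    · rintro x (rfl | rfl)
      · exact mem_orbit_self _
      · exact mem_orbit' _ _ _ g1_mem (by decide)
    · rintro x (rfl | rfl)
      · exact mem_orbit' _ _ _ g1_mem (by decide)
      · exact mem_orbit_self _

/-- The orbits of the subgroup generated by `(1 2)(6 7)`, `(4 5)(6 7)`, `(1 2)(4 5)`
acting on `{1,…,7}` are exactly `{3}`, `{1,2}`, `{4,5}`, `{6,7}` (written 0-indexed on
`Fin 7` as `{2}`, `{0,1}`, `{3,4}`, `{5,6}`). -/
theorem edgeMonodromy_orbits :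
    (Set.range fun a : Fin 7 => MulAction.orbit (Subgroup.closure edgeMonodromyPerms) a) =
      {({2} : Set (Fin 7)), {0, 1}, {3, 4}, {5, 6}} := by
  ext S
  constructor
  · rintro ⟨a, rfl⟩
    fin_cases a
    · exact Or.inr (Or.inl (orbit01 0 (by decide)))
    · exact Or.inr (Or.inl (orbit01 1 (by decide)))
    · exact Or.inl orbit2
    · exact Or.inr (Or.inr (Or.inl (orbit34 3 (by decide))))
    · exact Or.inr (Or.inr (Or.inl (orbit34 4 (by decide))))
    · exact Or.inr (Or.inr (Or.inr (orbit56 5 (by decide))))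
    · exact Or.inr (Or.inr (Or.inr (orbit56 6 (by decide))))
  · rintro (rfl | rfl | rfl | rfl)
    · exact ⟨2, orbit2⟩
    · exact ⟨0, orbit01 0 (by decide)⟩
    · exact ⟨3, orbit34 3 (by decide)⟩
    · exact ⟨5, orbit56 5 (by decide)⟩
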